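/- arXiv:1807.08846 — 6 statements merged into one kernel-verified Lean document; each statement's English description precedes it below -/
import Mathlib

section
/- For any s,t >= 1, the locally exchanged twisted cube LeTQ(s,t) is isomorphic to LeTQ(t,s). -/
/-- Flip bit `k` of the binary string `x`. -/
def bflip {n : ℕ} (x : Fin n → Bool) (k : Fin n) : Fin n → Bool :=
  Function.update x k (!(x k))

/-- Locally twisted cube adjacency on `n`-bit binary strings:
either flip bit `k` for some `k ≤ 1`; or, for some `k ≥ 2`, flip bits `k` and `k-1`
when bit 0 is `1`, resp. flip only bit `k` when bit 0 is `0`. -/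
def cubeAdj (n : ℕ) (x y : Fin n → Bool) : Prop :=
  (∃ k : Fin n, (k : ℕ) ≤ 1 ∧ y = bflip x k) ∨
  (∃ k : Fin n, 2 ≤ (k : ℕ) ∧
    ((∃ h0 : 0 < n, x ⟨0, h0⟩ = true ∧
        y = bflip (bflip x k) ⟨(k : ℕ) - 1, lt_of_le_of_lt (Nat.sub_le _ _) k.isLt⟩) ∨
     (∃ h0 : 0 < n, x ⟨0, h0⟩ = false ∧ y = bflip x k)))

/-- The locally twisted cube `LTQ_n`. -/
def LTQ (n : ℕ) : SimpleGraph (Fin n → Bool) where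
  Adj x y := x ≠ y ∧ (cubeAdj n x y ∨ cubeAdj n y x)
  symm := ⟨fun _ _ h => ⟨h.1.symm, h.2.symm⟩⟩
  loopless := ⟨fun _ h => h.1 rfl⟩

/-- A vertex of `LeTQ(s,t)`: the `a`-bits, the `b`-bits and the bit `c`. -/
abbrev LeTQVert (s t : ℕ) := (Fin s → Bool) × (Fin t → Bool) × Bool

/-- One-sided adjacency condition of the locally exchanged twisted cube. -/
def LeTQAdjOne (s t : ℕ) (u v : LeTQVert s t) : Prop :=
  (u.1 = v.1 ∧ u.2.1 = v.2.1 ∧ u.2.2 = !v.2.2) ∨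
  (u.2.2 = true ∧ v.2.2 = true ∧ u.1 = v.1 ∧ cubeAdj t u.2.1 v.2.1) ∨
  (u.2.2 = false ∧ v.2.2 = false ∧ u.2.1 = v.2.1 ∧ cubeAdj s u.1 v.1)

/-- The locally exchanged twisted cube `LeTQ(s,t)`. -/
def LeTQ (s t : ℕ) : SimpleGraph (LeTQVert s t) where
  Adj u v := u ≠ v ∧ (LeTQAdjOne s t u v ∨ LeTQAdjOne s t v u)
  symm := ⟨fun _ _ h => ⟨h.1.symm, h.2.symm⟩⟩
  loopless := ⟨fun _ h => h.1 rfl⟩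

/-! Exchanging the `a`- and `b`-blocks while complementing `c` swaps the two half-cubes
`c = 1` and `c = 0`, and with them the roles of the `b`- and `a`-conditions. -/

namespace LeTQ

def swapEquiv (s t : ℕ) : LeTQVert s t ≃ LeTQVert t s where
  toFun u := (u.2.1, u.1, !u.2.2)
  invFun u := (u.2.1, u.1, !u.2.2)
  left_inv u := by simp
  right_inv u := by simp

theorem adjOne_swapEquiv_iff {s t : ℕ} {u v : LeTQVert s t} :
    LeTQAdjOne t s (swapEquiv s t u) (swapEquiv s t v) ↔ LeTQAdjOne s t u v := by
  obtain ⟨a, b, c⟩ := u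
  obtain ⟨a', b', c'⟩ := v
  simp only [LeTQAdjOne, swapEquiv, Equiv.coe_fn_mk, Bool.not_eq_true', Bool.not_eq_false',
    Bool.not_inj_iff]
  tauto

def swapIso (s t : ℕ) : LeTQ s t ≃g LeTQ t s where
  toEquiv := swapEquiv s t
  map_rel_iff' {_ _} := by
    simp only [LeTQ, (swapEquiv s t).injective.ne_iff, adjOne_swapEquiv_iff]

end LeTQ

theorem stmt1_general (s t : ℕ) :
    Nonempty (LeTQ s t ≃g LeTQ t s) :=
  ⟨LeTQ.swapIso s t⟩

/-- LeTQ(s,t) ≅ LeTQ(t,s). -/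
theorem stmt1 (s t : ℕ) (hs : 1 ≤ s) (ht : 1 ≤ t) :
    Nonempty (LeTQ s t ≃g LeTQ t s) :=
  stmt1_general s t
end

section
/- In LeTQ(s,t) with s,t >= 1, every vertex whose last bit is 0 has degree s+1, and every vertex whose last bit is 1 has degree t+1. -/
/-!
In the locally twisted cube `LTQ n` a vertex `x` has exactly one neighbour in each dimension `k`:
flip bit `k`, and also bit `k - 1` when `k ≥ 2` and bit `0` of `x` is set. These `n` neighbours
are pairwise distinct, so `LTQ n` is `n`-regular. In `LeTQ(s,t)` a vertex with `c = 0` is adjacent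
to its `c`-flip and to the vertices obtained by replacing its `a`-bits by an `LTQ s`-neighbour,
which gives degree `s + 1`; symmetrically, degree `t + 1` when `c = 1`.
-/

section LTQ

variable {n : ℕ}

lemma bflip_apply_self (x : Fin n → Bool) (k : Fin n) : bflip x k k = !(x k) := by
  simp [bflip]

lemma bflip_apply_of_ne (x : Fin n → Bool) {k i : Fin n} (h : i ≠ k) : bflip x k i = x i :=
  Function.update_of_ne h _ x

lemma bflip_bflip (x : Fin n → Bool) (k : Fin n) : bflip (bflip x k) k = x := by
  simp [bflip]

lemma bflip_comm (x : Fin n → Bool) {j k : Fin n} (h : j ≠ k) :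
    bflip (bflip x j) k = bflip (bflip x k) j := by
  unfold bflip
  rw [Function.update_of_ne h.symm, Function.update_of_ne h, Function.update_comm h]

def twistedFlip (x : Fin n → Bool) (k : Fin n) : Fin n → Bool :=
  if (k : ℕ) ≤ 1 then bflip x k
  else if x ⟨0, k.pos⟩ then
    bflip (bflip x k) ⟨(k : ℕ) - 1, lt_of_le_of_lt (Nat.sub_le _ _) k.isLt⟩
  else bflip x k

lemma twistedFlip_apply_of_lt (x : Fin n → Bool) {k i : Fin n} (h : (k : ℕ) < i) :
    twistedFlip x k i = x i := by
  have hik : i ≠ k := Fin.ne_of_val_ne (by omega)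
  unfold twistedFlip
  split_ifs
  · exact bflip_apply_of_ne _ hik
  · rw [bflip_apply_of_ne _ (Fin.ne_of_val_ne (by simp; omega)), bflip_apply_of_ne _ hik]
  · exact bflip_apply_of_ne _ hik

lemma twistedFlip_apply_self (x : Fin n → Bool) (k : Fin n) : twistedFlip x k k = !(x k) := by
  unfold twistedFlip
  split_ifs
  · exact bflip_apply_self _ _
  · rw [bflip_apply_of_ne _ (Fin.ne_of_val_ne (by simp; omega)), bflip_apply_self]
  · exact bflip_apply_self _ _

lemma twistedFlip_ne (x : Fin n → Bool) (k : Fin n) : twistedFlip x k ≠ x := fun h => by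
  simpa [twistedFlip_apply_self] using congrFun h k

/-- Distinct dimensions give distinct neighbours: the higher of the two dimensions is flipped
by one of them and left alone by the other. -/
lemma twistedFlip_injective (x : Fin n → Bool) : Function.Injective (twistedFlip x) := by
  intro j k h
  by_contra hjk
  rcases Fin.lt_or_lt_of_ne hjk with hlt | hlt
  · simpa [twistedFlip_apply_of_lt x hlt, twistedFlip_apply_self] using congrFun h k
  · simpa [twistedFlip_apply_of_lt x hlt, twistedFlip_apply_self] using congrFun h j

/-- In dimensions `k ≥ 2` bit `0` is untouched, so the twist is undone by the same twist. -/
lemma twistedFlip_twistedFlip (x : Fin n → Bool) (k : Fin n) :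
    twistedFlip (twistedFlip x k) k = x := by
  by_cases hk : (k : ℕ) ≤ 1
  · simp only [twistedFlip, if_pos hk, bflip_bflip]
  simp only [twistedFlip, if_neg hk]
  set j : Fin n := ⟨(k : ℕ) - 1, lt_of_le_of_lt (Nat.sub_le _ _) k.isLt⟩
  set z : Fin n := ⟨0, k.pos⟩
  have hzk : z ≠ k := Fin.ne_of_val_ne (by simp [z]; omega)
  have hzj : z ≠ j := Fin.ne_of_val_ne (by simp [z, j]; omega)
  have hjk : j ≠ k := Fin.ne_of_val_ne (by simp [j]; omega)
  cases hx0 : x z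
  · simp [bflip_apply_of_ne _ hzk, hx0, bflip_bflip]
  · simp only [bflip_apply_of_ne _ hzj, bflip_apply_of_ne _ hzk, hx0, if_true]
    rw [bflip_comm _ hjk.symm, bflip_bflip, bflip_bflip]

lemma cubeAdj_iff_exists_twistedFlip {x y : Fin n → Bool} :
    cubeAdj n x y ↔ ∃ k, y = twistedFlip x k := by
  constructor
  · rintro (⟨k, hk, rfl⟩ | ⟨k, hk, ⟨_, hx0, rfl⟩ | ⟨_, hx0, rfl⟩⟩)
    · exact ⟨k, by rw [twistedFlip, if_pos hk]⟩
    · exact ⟨k, by rw [twistedFlip, if_neg (by omega), if_pos hx0]⟩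
    · exact ⟨k, by rw [twistedFlip, if_neg (by omega), if_neg (by simp [hx0])]⟩
  · rintro ⟨k, rfl⟩
    unfold twistedFlip
    split_ifs with hk hx0
    · exact Or.inl ⟨k, hk, rfl⟩
    · exact Or.inr ⟨k, by omega, Or.inl ⟨k.pos, hx0, rfl⟩⟩
    · exact Or.inr ⟨k, by omega, Or.inr ⟨k.pos, by simpa using hx0, rfl⟩⟩

lemma cubeAdj_comm {x y : Fin n → Bool} : cubeAdj n x y ↔ cubeAdj n y x := by
  suffices ∀ x y, cubeAdj n x y → cubeAdj n y x from ⟨this x y, this y x⟩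
  intro x y h
  obtain ⟨k, rfl⟩ := cubeAdj_iff_exists_twistedFlip.mp h
  exact cubeAdj_iff_exists_twistedFlip.mpr ⟨k, (twistedFlip_twistedFlip x k).symm⟩

lemma cubeAdj.ne {x y : Fin n → Bool} (h : cubeAdj n x y) : x ≠ y := by
  obtain ⟨k, rfl⟩ := cubeAdj_iff_exists_twistedFlip.mp h
  exact (twistedFlip_ne x k).symm

lemma LTQ_adj_iff {x y : Fin n → Bool} : (LTQ n).Adj x y ↔ cubeAdj n x y :=
  ⟨fun ⟨_, h⟩ => h.elim id cubeAdj_comm.mpr, fun h => ⟨h.ne, Or.inl h⟩⟩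

lemma LTQ_neighborSet (x : Fin n → Bool) : (LTQ n).neighborSet x = Set.range (twistedFlip x) := by
  ext y
  simp only [SimpleGraph.mem_neighborSet, LTQ_adj_iff, cubeAdj_iff_exists_twistedFlip,
    Set.mem_range, eq_comm]

lemma LTQ_neighborSet_ncard (x : Fin n → Bool) : ((LTQ n).neighborSet x).ncard = n := by
  rw [LTQ_neighborSet, Set.ncard_range_of_injective (twistedFlip_injective x),
    Nat.card_eq_fintype_card, Fintype.card_fin]

end LTQ

section LeTQ

variable {s t : ℕ}

lemma LeTQAdjOne_comm {u v : LeTQVert s t} : LeTQAdjOne s t u v ↔ LeTQAdjOne s t v u := by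
  unfold LeTQAdjOne
  rw [cubeAdj_comm (x := u.2.1), cubeAdj_comm (x := u.1)]
  grind

lemma LeTQAdjOne.ne {u v : LeTQVert s t} (h : LeTQAdjOne s t u v) : u ≠ v := by
  rintro rfl
  rcases h with ⟨-, -, h⟩ | ⟨-, -, -, h⟩ | ⟨-, -, -, h⟩
  · simp at h
  · exact h.ne rfl
  · exact h.ne rfl

lemma LeTQ_adj_iff {u v : LeTQVert s t} : (LeTQ s t).Adj u v ↔ LeTQAdjOne s t u v :=
  ⟨fun ⟨_, h⟩ => h.elim id LeTQAdjOne_comm.mpr, fun h => ⟨h.ne, Or.inl h⟩⟩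

lemma LeTQ_neighborSet_false (a : Fin s → Bool) (b : Fin t → Bool) :
    (LeTQ s t).neighborSet (a, b, false) =
      insert (a, b, true) ((fun a' => (a', b, false)) '' (LTQ s).neighborSet a) := by
  ext ⟨a', b', c'⟩
  simp only [SimpleGraph.mem_neighborSet, LeTQ_adj_iff, LeTQAdjOne, LTQ_adj_iff,
    Set.mem_insert_iff, Set.mem_image, Prod.mk.injEq]
  grind

lemma LeTQ_neighborSet_true (a : Fin s → Bool) (b : Fin t → Bool) :
    (LeTQ s t).neighborSet (a, b, true) =
      insert (a, b, false) ((fun b' => (a, b', true)) '' (LTQ t).neighborSet b) := by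
  ext ⟨a', b', c'⟩
  simp only [SimpleGraph.mem_neighborSet, LeTQ_adj_iff, LeTQAdjOne, LTQ_adj_iff,
    Set.mem_insert_iff, Set.mem_image, Prod.mk.injEq]
  grind

end LeTQ

theorem stmt2_general (s t : ℕ) (u : LeTQVert s t) :
    (u.2.2 = false → ((LeTQ s t).neighborSet u).ncard = s + 1) ∧
    (u.2.2 = true → ((LeTQ s t).neighborSet u).ncard = t + 1) := by
  obtain ⟨a, b, c⟩ := u
  constructor
  · rintro rfl
    rw [LeTQ_neighborSet_false, Set.ncard_insert_of_notMem (by simp),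
      Set.ncard_image_of_injective _ (fun _ _ h => (Prod.ext_iff.mp h).1), LTQ_neighborSet_ncard]
  · rintro rfl
    rw [LeTQ_neighborSet_true, Set.ncard_insert_of_notMem (by simp),
      Set.ncard_image_of_injective _ (fun _ _ h => (Prod.ext_iff.mp (Prod.ext_iff.mp h).2).1),
      LTQ_neighborSet_ncard]

/-- Vertices with last bit 0 have degree s+1, those with last bit 1 have degree t+1. -/
theorem stmt2 (s t : ℕ) (hs : 1 ≤ s) (ht : 1 ≤ t) (u : LeTQVert s t) :
    (u.2.2 = false → ((LeTQ s t).neighborSet u).ncard = s + 1) ∧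
    (u.2.2 = true → ((LeTQ s t).neighborSet u).ncard = t + 1) :=
  stmt2_general s t u
end

section
/- For s,t >= 1, the locally exchanged twisted cube LeTQ(s,t) contains no triangle. -/
/-!
Every edge of `LTQ n` flips either a single bit `k`, or, when `k ≥ 2` and bit 0 is `1`, the two
bits `k` and `k - 1`; in both cases bit 0 survives unless `k = 0`. Around a triangle the flip set
of one edge is the symmetric difference of the other two. Single flips cannot close up by parity,
and two adjacent pairs never have an adjacent pair as symmetric difference; in the remaining case
two single flips of bits `k ≥ 2` and `k - 1` match a pair flip, but flipping bit `k` alone needs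
bit 0 to be `0` while the pair needs it to be `1`, and bit 0 is constant on this triangle.

In `LeTQ s t` every edge either flips `c` alone or stays inside the layer `c = 1` (a copy of
`LTQ t`) or `c = 0` (a copy of `LTQ s`). The `c`-edges form a perfect matching, so a triangle
cannot use one, hence lies in a single layer.
-/

theorem bflip_apply {n : ℕ} (x : Fin n → Bool) (k i : Fin n) :
    bflip x k i = xor (x i) (decide (i = k)) := by
  unfold bflip; by_cases h : i = k <;> simp [h]

theorem Bool.ne_iff_not_ne_iff_ne (p q r : Bool) : r ≠ q ↔ ¬(q ≠ p ↔ r ≠ p) := by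
  cases p <;> cases q <;> cases r <;> decide

namespace LTQ

variable {n : ℕ}

/-- Whether the `k`-th twisted-cube move at a vertex with bit 0 equal to `b₀` flips bit `i`. -/
def IsFlipped (b₀ : Bool) (k i : ℕ) : Prop := i = k ∨ 2 ≤ k ∧ b₀ = true ∧ i + 1 = k

instance (b₀ : Bool) (k i : ℕ) : Decidable (IsFlipped b₀ k i) := by
  unfold IsFlipped; infer_instance

def nbr (x : Fin n → Bool) (k : Fin n) : Fin n → Bool :=
  fun i => xor (x i) (decide (IsFlipped (x ⟨0, k.pos⟩) k i))

theorem nbr_apply_ne_iff (x : Fin n → Bool) (k i : Fin n) :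
    nbr x k i ≠ x i ↔ IsFlipped (x ⟨0, k.pos⟩) k i := by
  by_cases h : IsFlipped (x ⟨0, k.pos⟩) k i <;> simp [nbr, h]

theorem nbr_ne (x : Fin n → Bool) (k : Fin n) : nbr x k ≠ x := fun h =>
  (nbr_apply_ne_iff x k k).2 (Or.inl rfl) (congrFun h k)

theorem isFlipped_nbr (x : Fin n → Bool) (k : Fin n) (i : ℕ) :
    IsFlipped (nbr x k ⟨0, k.pos⟩) k i ↔ IsFlipped (x ⟨0, k.pos⟩) k i := by
  by_cases hk : (k : ℕ) < 2
  · simp only [IsFlipped]; omega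
  · have h0 : nbr x k ⟨0, k.pos⟩ = x ⟨0, k.pos⟩ := by
      by_contra h
      have hflip := (nbr_apply_ne_iff x k _).1 h
      simp only [IsFlipped] at hflip
      omega
    rw [h0]

theorem nbr_nbr (x : Fin n → Bool) (k : Fin n) : nbr (nbr x k) k = x := by
  funext i
  change xor (nbr x k i) (decide (IsFlipped (nbr x k ⟨0, k.pos⟩) k i)) = x i
  simp only [isFlipped_nbr]
  simp [nbr]

theorem nbr_eq_bflip_of_le_one (x : Fin n → Bool) {k : Fin n} (hk : (k : ℕ) ≤ 1) :
    nbr x k = bflip x k := by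
  funext i
  simp only [nbr, bflip_apply, IsFlipped, Fin.ext_iff]
  exact congrArg _ (Bool.decide_congr (by omega))

theorem nbr_eq_bflip_of_bit0_eq_false {x : Fin n → Bool} {k : Fin n} (h0 : 0 < n) (hx : x ⟨0, h0⟩ = false) :
    nbr x k = bflip x k := by
  funext i
  simp only [nbr, bflip_apply, IsFlipped, Fin.ext_iff, hx, Bool.false_eq_true, false_and,
    and_false, or_false]

theorem nbr_eq_bflip_bflip_of_bit0_eq_true {x : Fin n → Bool} {k : Fin n} (hk : 2 ≤ (k : ℕ)) (h0 : 0 < n)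
    (hx : x ⟨0, h0⟩ = true) :
    nbr x k = bflip (bflip x k) ⟨(k : ℕ) - 1, lt_of_le_of_lt (Nat.sub_le _ _) k.isLt⟩ := by
  funext i
  simp only [nbr, bflip_apply, IsFlipped, Fin.ext_iff, hx, Bool.xor_assoc]
  have hk1 : (k : ℕ) - 1 + 1 = k := by omega
  have hne : (k : ℕ) - 1 ≠ k := by omega
  congr 1
  by_cases h1 : (i : ℕ) = k <;> by_cases h2 : (i : ℕ) = k - 1 <;>
    simp [h1, h2, hk, hk1, hne.symm] <;> omega

theorem cubeAdj_iff {x y : Fin n → Bool} : cubeAdj n x y ↔ ∃ k, y = nbr x k := by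
  constructor
  · rintro (⟨k, hk, rfl⟩ | ⟨k, hk, ⟨h0, hx, rfl⟩ | ⟨h0, hx, rfl⟩⟩)
    · exact ⟨k, (nbr_eq_bflip_of_le_one x hk).symm⟩
    · exact ⟨k, (nbr_eq_bflip_bflip_of_bit0_eq_true hk h0 hx).symm⟩
    · exact ⟨k, (nbr_eq_bflip_of_bit0_eq_false h0 hx).symm⟩
  · rintro ⟨k, rfl⟩
    by_cases hk : (k : ℕ) ≤ 1
    · exact Or.inl ⟨k, hk, nbr_eq_bflip_of_le_one x hk⟩
    right
    refine ⟨k, by omega, ?_⟩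
    cases hx : x ⟨0, k.pos⟩
    · exact Or.inr ⟨k.pos, hx, nbr_eq_bflip_of_bit0_eq_false k.pos hx⟩
    · exact Or.inl ⟨k.pos, hx, nbr_eq_bflip_bflip_of_bit0_eq_true (by omega) k.pos hx⟩

theorem nbr_nbr_ne_nbr (x : Fin n → Bool) (a b c : Fin n) : nbr (nbr x a) b ≠ nbr x c := by
  intro h
  have h0 : 0 < n := a.pos
  have key : ∀ i : Fin n, IsFlipped (nbr x a ⟨0, h0⟩) b i ↔
      ¬(IsFlipped (x ⟨0, h0⟩) a i ↔ IsFlipped (x ⟨0, h0⟩) c i) := fun i => by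
    rw [← nbr_apply_ne_iff (nbr x a), ← nbr_apply_ne_iff x a, ← nbr_apply_ne_iff x c, h]
    exact Bool.ne_iff_not_ne_iff_ne ..
  have hy0 : nbr x a ⟨0, h0⟩ ≠ x ⟨0, h0⟩ ↔ IsFlipped (x ⟨0, h0⟩) a 0 := nbr_apply_ne_iff x a _
  -- All flip sets involved lie in `{a, a - 1, b, b - 1, c, c - 1}`.
  have ka := key a
  have ka' := key ⟨a - 1, by omega⟩
  have kb := key b
  have kb' := key ⟨b - 1, by omega⟩
  have kc := key c
  have kc' := key ⟨c - 1, by omega⟩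
  revert ka ka' kb kb' kc kc' hy0
  cases nbr x a ⟨0, h0⟩ <;> cases x ⟨0, h0⟩ <;>
    simp only [IsFlipped, ne_eq, Bool.false_eq_true, Bool.true_eq_false, not_true_eq_false,
      not_false_eq_true, true_and, false_and, and_false, or_false, true_or, true_iff,
      false_iff, iff_true] <;>
    omega

theorem adj_iff {x y : Fin n → Bool} : (LTQ n).Adj x y ↔ ∃ k, y = nbr x k := by
  constructor
  · rintro ⟨-, h | h⟩
    · exact cubeAdj_iff.1 h
    · obtain ⟨k, rfl⟩ := cubeAdj_iff.1 h
      exact ⟨k, (nbr_nbr y k).symm⟩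
  · rintro ⟨k, rfl⟩
    exact ⟨(nbr_ne x k).symm, Or.inl (cubeAdj_iff.2 ⟨k, rfl⟩)⟩

theorem cliqueFree_three (n : ℕ) : (LTQ n).CliqueFree 3 := by
  intro S hS
  obtain ⟨x, y, z, hxy, hxz, hyz, -⟩ := SimpleGraph.is3Clique_iff.1 hS
  obtain ⟨a, rfl⟩ := adj_iff.1 hxy
  obtain ⟨c, rfl⟩ := adj_iff.1 hxz
  obtain ⟨b, hb⟩ := adj_iff.1 hyz
  exact nbr_nbr_ne_nbr x a b c hb.symm

end LTQ

namespace LeTQ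

variable {s t : ℕ} {u v w : LeTQVert s t}

theorem adj_cases (h : (LeTQ s t).Adj u v) :
    (u.1 = v.1 ∧ u.2.1 = v.2.1 ∧ u.2.2 ≠ v.2.2) ∨
    (u.2.2 = true ∧ v.2.2 = true ∧ u.1 = v.1 ∧ (LTQ t).Adj u.2.1 v.2.1) ∨
    (u.2.2 = false ∧ v.2.2 = false ∧ u.2.1 = v.2.1 ∧ (LTQ s).Adj u.1 v.1) := by
  obtain ⟨hne, h⟩ := h
  have hb : u.1 = v.1 → u.2.2 = v.2.2 → u.2.1 ≠ v.2.1 := fun ha hc hb =>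
    hne (Prod.ext ha (Prod.ext hb hc))
  have ha : u.2.1 = v.2.1 → u.2.2 = v.2.2 → u.1 ≠ v.1 := fun hb hc ha =>
    hne (Prod.ext ha (Prod.ext hb hc))
  rcases h with (⟨h₁, h₂, h₃⟩ | ⟨hu, hv, h₁, h₂⟩ | ⟨hu, hv, h₁, h₂⟩) |
    (⟨h₁, h₂, h₃⟩ | ⟨hv, hu, h₁, h₂⟩ | ⟨hv, hu, h₁, h₂⟩)
  · exact Or.inl ⟨h₁, h₂, by simp [h₃]⟩
  · exact Or.inr (Or.inl ⟨hu, hv, h₁, hb h₁ (hu.trans hv.symm), Or.inl h₂⟩)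
  · exact Or.inr (Or.inr ⟨hu, hv, h₁, ha h₁ (hu.trans hv.symm), Or.inl h₂⟩)
  · exact Or.inl ⟨h₁.symm, h₂.symm, by simp [h₃]⟩
  · exact Or.inr (Or.inl ⟨hu, hv, h₁.symm, hb h₁.symm (hu.trans hv.symm), Or.inr h₂⟩)
  · exact Or.inr (Or.inr ⟨hu, hv, h₁.symm, ha h₁.symm (hu.trans hv.symm), Or.inr h₂⟩)

theorem eq_of_adj_of_snd_snd_ne (h : (LeTQ s t).Adj u v) (hc : u.2.2 ≠ v.2.2) :
    u.1 = v.1 ∧ u.2.1 = v.2.1 := by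
  rcases adj_cases h with ⟨ha, hb, -⟩ | ⟨hu, hv, -⟩ | ⟨hu, hv, -⟩
  · exact ⟨ha, hb⟩
  · exact absurd (hu.trans hv.symm) hc
  · exact absurd (hu.trans hv.symm) hc

theorem snd_snd_eq_of_triangle (huv : (LeTQ s t).Adj u v) (huw : (LeTQ s t).Adj u w)
    (hvw : (LeTQ s t).Adj v w) : u.2.2 = v.2.2 := by
  by_contra hc
  obtain ⟨ha, hb⟩ := eq_of_adj_of_snd_snd_ne huv hc
  have hw : w.2.2 = u.2.2 ∨ w.2.2 = v.2.2 := by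
    revert hc; cases u.2.2 <;> cases v.2.2 <;> cases w.2.2 <;> decide
  rcases hw with hw | hw
  · obtain ⟨ha', hb'⟩ := eq_of_adj_of_snd_snd_ne hvw (hw ▸ Ne.symm hc)
    exact huw.ne (Prod.ext (ha.trans ha') (Prod.ext (hb.trans hb') hw.symm))
  · obtain ⟨ha', hb'⟩ := eq_of_adj_of_snd_snd_ne huw (hw ▸ hc)
    exact hvw.ne (Prod.ext (ha.symm.trans ha') (Prod.ext (hb.symm.trans hb') hw.symm))

theorem adj_fst_of_adj (h : (LeTQ s t).Adj u v) (hu : u.2.2 = false) (hv : v.2.2 = false) :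
    (LTQ s).Adj u.1 v.1 := by
  rcases adj_cases h with ⟨-, -, hc⟩ | ⟨hu', -⟩ | ⟨-, -, -, h⟩
  · exact absurd (hu.trans hv.symm) hc
  · exact absurd (hu.symm.trans hu') (by decide)
  · exact h

theorem adj_snd_fst_of_adj (h : (LeTQ s t).Adj u v) (hu : u.2.2 = true) (hv : v.2.2 = true) :
    (LTQ t).Adj u.2.1 v.2.1 := by
  rcases adj_cases h with ⟨-, -, hc⟩ | ⟨-, -, -, h⟩ | ⟨hu', -⟩
  · exact absurd (hu.trans hv.symm) hc
  · exact h
  · exact absurd (hu.symm.trans hu') (by decide)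

end LeTQ

theorem stmt4_general (s t : ℕ) :
    (LeTQ s t).CliqueFree 3 := by
  intro S hS
  obtain ⟨u, v, w, huv, huw, hvw, -⟩ := SimpleGraph.is3Clique_iff.1 hS
  have hv := LeTQ.snd_snd_eq_of_triangle huv huw hvw
  have hw := LeTQ.snd_snd_eq_of_triangle huw huv hvw.symm
  cases hu : u.2.2 <;> rw [hu] at hv hw
  · exact LTQ.cliqueFree_three s {u.1, v.1, w.1} (SimpleGraph.is3Clique_triple_iff.2
      ⟨LeTQ.adj_fst_of_adj huv hu hv.symm, LeTQ.adj_fst_of_adj huw hu hw.symm,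
        LeTQ.adj_fst_of_adj hvw hv.symm hw.symm⟩)
  · exact LTQ.cliqueFree_three t {u.2.1, v.2.1, w.2.1} (SimpleGraph.is3Clique_triple_iff.2
      ⟨LeTQ.adj_snd_fst_of_adj huv hu hv.symm, LeTQ.adj_snd_fst_of_adj huw hu hw.symm,
        LeTQ.adj_snd_fst_of_adj hvw hv.symm hw.symm⟩)

/-- LeTQ(s,t) contains no triangle. -/
theorem stmt4 (s t : ℕ) (hs : 1 ≤ s) (ht : 1 ≤ t) :
    (LeTQ s t).CliqueFree 3 :=
  stmt4_general s t
end

section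
/- In LeTQ(s,t), for each fixed binary string B of length t, the induced subgraph on the set L_B of vertices of form A B 0 (A ranging over binary strings of length s) is isomorphic to the locally twisted cube LTQ_s; moreover there are no edges between L_B and L_{B'} for distinct B, B'. -/
namespace LeTQ

variable {s t : ℕ}

/-- The cluster `L_B` of vertices `A B 0`. -/
def classZeroCluster (B : Fin t → Bool) : Set (LeTQVert s t) :=
  {u | u.2.1 = B ∧ u.2.2 = false}

lemma adjOne_false_false_iff (A A' : Fin s → Bool) (B B' : Fin t → Bool) :
    LeTQAdjOne s t (A, B, false) (A', B', false) ↔ B = B' ∧ cubeAdj s A A' := by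
  simp [LeTQAdjOne]

lemma adj_false_false_iff (A A' : Fin s → Bool) (B B' : Fin t → Bool) :
    (LeTQ s t).Adj (A, B, false) (A', B', false) ↔ B = B' ∧ (LTQ s).Adj A A' := by
  simp only [LeTQ, LTQ, adjOne_false_false_iff, ne_eq, Prod.mk.injEq, and_true]
  constructor
  · rintro ⟨hne, ⟨hB, h⟩ | ⟨hB, h⟩⟩
    · exact ⟨hB, fun hA => hne ⟨hA, hB⟩, .inl h⟩
    · exact ⟨hB.symm, fun hA => hne ⟨hA, hB.symm⟩, .inr h⟩
  · rintro ⟨rfl, hne, h⟩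
    exact ⟨fun h' => hne h'.1, h.imp (⟨rfl, ·⟩) (⟨rfl, ·⟩)⟩

def classZeroClusterIso (B : Fin t → Bool) :
    (LeTQ s t).induce (classZeroCluster B) ≃g LTQ s where
  toFun u := u.1.1
  invFun A := ⟨(A, B, false), rfl, rfl⟩
  left_inv := by
    rintro ⟨⟨A, B', c⟩, hB : B' = B, hc : c = false⟩
    subst hB hc
    rfl
  right_inv _ := rfl
  map_rel_iff' := by
    rintro ⟨⟨A, B₁, c₁⟩, hB₁ : B₁ = B, hc₁ : c₁ = false⟩
      ⟨⟨A', B₂, c₂⟩, hB₂ : B₂ = B, hc₂ : c₂ = false⟩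
    subst hB₁ hc₁ hB₂ hc₂
    simp [adj_false_false_iff]

lemma not_adj_of_mem_classZeroCluster {B B' : Fin t → Bool} (hBB' : B ≠ B')
    {u v : LeTQVert s t} (hu : u ∈ classZeroCluster B) (hv : v ∈ classZeroCluster B') :
    ¬ (LeTQ s t).Adj u v := by
  obtain ⟨A, B₁, c₁⟩ := u
  obtain ⟨A', B₂, c₂⟩ := v
  obtain ⟨hB₁ : B₁ = B, hc₁ : c₁ = false⟩ := hu
  obtain ⟨hB₂ : B₂ = B', hc₂ : c₂ = false⟩ := hv
  subst hB₁ hc₁ hB₂ hc₂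
  exact fun h => hBB' ((adj_false_false_iff A A' _ _).mp h).1

end LeTQ

theorem stmt8_general (s t : ℕ) :
    (∀ B : Fin t → Bool,
      Nonempty ((LeTQ s t).induce
        {u : LeTQVert s t | u.2.1 = B ∧ u.2.2 = false} ≃g LTQ s)) ∧
    ∀ B B' : Fin t → Bool, B ≠ B' →
      ∀ u v : LeTQVert s t, u.2.1 = B → u.2.2 = false → v.2.1 = B' → v.2.2 = false →
        ¬ (LeTQ s t).Adj u v :=
  ⟨fun B => ⟨LeTQ.classZeroClusterIso B⟩,
    fun _ _ hBB' _ _ hub huc hvb hvc =>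
      LeTQ.not_adj_of_mem_classZeroCluster hBB' ⟨hub, huc⟩ ⟨hvb, hvc⟩⟩

/-- Each Class-0 cluster induces a copy of LTQ_s, and distinct Class-0 clusters have
no edges between them. -/
theorem stmt8 (s t : ℕ) (hs : 1 ≤ s) (ht : 1 ≤ t) :
    (∀ B : Fin t → Bool,
      Nonempty ((LeTQ s t).induce
        {u : LeTQVert s t | u.2.1 = B ∧ u.2.2 = false} ≃g LTQ s)) ∧
    ∀ B B' : Fin t → Bool, B ≠ B' →
      ∀ u v : LeTQVert s t, u.2.1 = B → u.2.2 = false → v.2.1 = B' → v.2.2 = false →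
        ¬ (LeTQ s t).Adj u v :=
  stmt8_general s t
end

section
/- For 1 <= s <= t and 0 <= g <= s, if F_1 and F_2 are two distinct g-good-neighbor conditional faulty sets of LeTQ(s,t) with |F_1|, |F_2| <= 2^g(s-g+2)-1, then F_1 union F_2 is a proper subset of the vertex set of LeTQ(s,t). -/
/-!
Pure counting: each set has fewer than `2 ^ g * (s - g + 2) ≤ 2 ^ (s + 1)` elements, so together
they have fewer than `2 ^ (s + 2) ≤ 2 ^ (s + t + 1)` elements, which is the number of vertices
once `t ≥ 1`.
-/

theorem card_leTQVert (s t : ℕ) : Nat.card (LeTQVert s t) = 2 ^ (s + t + 1) := by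
  simp [Nat.card_eq_fintype_card, Fintype.card_prod, pow_add, mul_assoc]

theorem two_pow_mul_sub_add_two_le {g s : ℕ} (hg : g ≤ s) :
    2 ^ g * (s - g + 2) ≤ 2 ^ (s + 1) :=
  calc 2 ^ g * (s - g + 2)
      ≤ 2 ^ g * 2 ^ (s - g + 1) := Nat.mul_le_mul_left _ (s - g + 1).lt_two_pow_self
    _ = 2 ^ (s + 1) := by rw [← pow_add]; congr 1; omega

theorem stmt12_general (s t g : ℕ) (hs : 1 ≤ s) (hst : s ≤ t) (hg : g ≤ s)
    (F1 F2 : Set (LeTQVert s t))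
    (hc1 : F1.ncard ≤ 2 ^ g * (s - g + 2) - 1)
    (hc2 : F2.ncard ≤ 2 ^ g * (s - g + 2) - 1) :
    F1 ∪ F2 ≠ Set.univ := by
  apply Set.union_ne_univ_of_ncard_add_ncard_lt
  have hsize := two_pow_mul_sub_add_two_le hg
  generalize 2 ^ g * (s - g + 2) = N at hsize hc1 hc2
  calc F1.ncard + F2.ncard < 2 ^ (s + 1) + 2 ^ (s + 1) := by have := Nat.two_pow_pos (s + 1); omega
    _ = 2 ^ (s + 2) := by ring
    _ ≤ 2 ^ (s + t + 1) := Nat.pow_le_pow_right two_pos (by omega)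
    _ = Nat.card (LeTQVert s t) := (card_leTQVert s t).symm

/-- Two distinct small g-good-neighbor faulty sets cannot cover all vertices. -/
theorem stmt12 (s t g : ℕ) (hs : 1 ≤ s) (hst : s ≤ t) (hg : g ≤ s)
    (F1 F2 : Set (LeTQVert s t)) (hne : F1 ≠ F2)
    (hg1 : ∀ v ∉ F1, g ≤ ((LeTQ s t).neighborSet v \ F1).ncard)
    (hg2 : ∀ v ∉ F2, g ≤ ((LeTQ s t).neighborSet v \ F2).ncard)
    (hc1 : F1.ncard ≤ 2 ^ g * (s - g + 2) - 1)
    (hc2 : F2.ncard ≤ 2 ^ g * (s - g + 2) - 1) :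
    F1 ∪ F2 ≠ Set.univ :=
  stmt12_general s t g hs hst hg F1 F2 hc1 hc2
end

section
/- Let G be a graph and F_1, F_2 distinct vertex sets with F_1 union F_2 a proper subset of V(G). If (F_1, F_2) is indistinguishable under the MM* model, G is connected, and G - F_1 - F_2 has no isolated vertices, then F_1 intersect F_2 is nonempty. -/
/-- Distinguishability of two faulty sets under the MM* model. -/
def mmDistinguishable {V : Type*} (G : SimpleGraph V) (F1 F2 : Set V) : Prop :=
  (∃ u w v, u ∉ F1 ∪ F2 ∧ w ∉ F1 ∪ F2 ∧ v ∈ symmDiff F1 F2 ∧ G.Adj u w ∧ G.Adj v w) ∨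
  (∃ u v w, u ∈ F1 \ F2 ∧ v ∈ F1 \ F2 ∧ u ≠ v ∧ w ∉ F1 ∪ F2 ∧ G.Adj u w ∧ G.Adj v w) ∨
  (∃ u v w, u ∈ F2 \ F1 ∧ v ∈ F2 \ F1 ∧ u ≠ v ∧ w ∉ F1 ∪ F2 ∧ G.Adj u w ∧ G.Adj v w)

lemma cross_edge {V : Type*} {G : SimpleGraph V} {S : Set V} :
    ∀ {a b : V}, G.Walk a b → a ∈ S → b ∉ S →
      ∃ v w, v ∈ S ∧ w ∉ S ∧ G.Adj v w := by
  intro a b p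
  induction p with
  | nil => intro ha hb; exact absurd ha hb
  | @cons a c b h p ih =>
    intro ha hb
    by_cases hc : c ∈ S
    · exact ih hc hb
    · exact ⟨a, c, ha, hc, h⟩

/-- If an indistinguishable pair (under MM*) in a connected graph leaves no isolated
vertex outside, then the two faulty sets intersect. -/
theorem stmt16 {V : Type*} (G : SimpleGraph V) (F1 F2 : Set V) (hne : F1 ≠ F2)
    (hprop : F1 ∪ F2 ≠ Set.univ) (hconn : G.Connected)
    (hind : ¬ mmDistinguishable G F1 F2)
    (hiso : ∀ v ∉ F1 ∪ F2, ∃ w ∉ F1 ∪ F2, G.Adj v w) :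
    (F1 ∩ F2).Nonempty := by
  rw [Set.nonempty_iff_ne_empty]
  intro hdisj
  -- F1 ∪ F2 is nonempty since F1 ≠ F2
  have hUne : (F1 ∪ F2).Nonempty := by
    rcases Set.eq_empty_or_nonempty (F1 ∪ F2) with h | h
    · rw [Set.union_empty_iff] at h
      exact absurd (h.1.trans h.2.symm) hne
    · exact h
  obtain ⟨a, ha⟩ := hUne
  obtain ⟨b, hb⟩ : ∃ b, b ∉ F1 ∪ F2 := by
    by_contra h
    push_neg at h
    exact hprop (Set.eq_univ_of_forall h)
  obtain ⟨p⟩ := hconn a b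
  obtain ⟨v, w, hv, hw, hadj⟩ := cross_edge p ha hb
  obtain ⟨u, hu, huw⟩ := hiso w hw
  -- v ∈ symmDiff F1 F2 since F1 ∩ F2 = ∅
  have hvsd : v ∈ symmDiff F1 F2 := by
    rw [Set.mem_symmDiff]
    rcases hv with h1 | h2
    · exact Or.inl ⟨h1, fun h2 => (Set.eq_empty_iff_forall_notMem.mp hdisj v) ⟨h1, h2⟩⟩
    · exact Or.inr ⟨h2, fun h1 => (Set.eq_empty_iff_forall_notMem.mp hdisj v) ⟨h1, h2⟩⟩
  exact hind (Or.inl ⟨u, w, v, hu, hw, hvsd, huw.symm, hadj⟩)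
end
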